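/- arXiv:2409.06021 — 2 statements merged into one kernel-verified Lean document; each statement's English description precedes it below -/
import Mathlib

section
/- Let G be a graph, x ∈ V(G) with N_G(x) = {y_1,...,y_n}. Then for all 1 ≤ k ≤ ν(G), ((I(G)^{[k]} + ⟨x y_1, ..., x y_n⟩) : x) = I(G \ {x, y_1, ..., y_n})^{[k]} + ⟨y_1, ..., y_n⟩. -/
open MvPolynomial

noncomputable section

/-- The product of the two variables corresponding to the endpoints of an edge. -/
def edgeProd (K : Type*) [CommSemiring K] {V : Type*} (e : Sym2 V) : MvPolynomial V K :=
  Sym2.lift ⟨fun a b => X a * X b, fun a b => mul_comm _ _⟩ e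

/-- The edge ideal of a simple graph. -/
def edgeIdeal (K : Type*) [CommSemiring K] {V : Type*} (G : SimpleGraph V) :
    Ideal (MvPolynomial V K) :=
  Ideal.span {p | ∃ e ∈ G.edgeSet, p = edgeProd K e}

/-- A finite set of edges of `G` forming a matching (pairwise disjoint edges). -/
def IsMatchingSet {V : Type*} (G : SimpleGraph V) (M : Finset (Sym2 V)) : Prop :=
  (↑M : Set (Sym2 V)) ⊆ G.edgeSet ∧
    (↑M : Set (Sym2 V)).Pairwise fun e f => ∀ v, v ∈ e → v ∉ f

/-- The matching number of a graph: the maximum size of a matching. -/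
def matchingNumber {V : Type*} (G : SimpleGraph V) : ℕ :=
  sSup {k | ∃ M : Finset (Sym2 V), IsMatchingSet G M ∧ M.card = k}

/-- The ideal generated by the squarefree monomials `∏_{e ∈ M} x_e` over all
`k`-matchings `M` of `G`; this is the `k`-th squarefree (matching) power of the edge ideal. -/
def matchingPow (K : Type*) [CommSemiring K] {V : Type*} (G : SimpleGraph V) (k : ℕ) :
    Ideal (MvPolynomial V K) :=
  Ideal.span {p | ∃ M : Finset (Sym2 V), IsMatchingSet G M ∧ M.card = k ∧
    p = ∏ e ∈ M, edgeProd K e}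

/-- The `k`-th squarefree power of an ideal: the ideal generated by all squarefree
monomials belonging to `I ^ k`. -/
def sqfreePow {K V : Type*} [CommSemiring K] (I : Ideal (MvPolynomial V K)) (k : ℕ) :
    Ideal (MvPolynomial V K) :=
  Ideal.span {p | (∃ A : Finset V, p = ∏ v ∈ A, X v) ∧ p ∈ I ^ k}

/-- Deleting a set of vertices from a graph (keeping the ambient vertex type:
all edges meeting `W` are removed). -/
def delVerts {V : Type*} (G : SimpleGraph V) (W : Set V) : SimpleGraph V where
  Adj a b := G.Adj a b ∧ a ∉ W ∧ b ∉ W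
  symm := ⟨fun a b h => ⟨h.1.symm, h.2.2, h.2.1⟩⟩
  loopless := ⟨fun a h => G.irrefl h.1⟩

/-- The whisker graph `W(G)`: to each vertex `x` of `G` (viewed as `inl x`) one
attaches a new pendant vertex `inr x`. -/
def whiskerGraph {V : Type*} (G : SimpleGraph V) : SimpleGraph (V ⊕ V) :=
  SimpleGraph.fromRel fun a b =>
    (∃ u v, G.Adj u v ∧ a = Sum.inl u ∧ b = Sum.inl v) ∨ (∃ u, a = Sum.inl u ∧ b = Sum.inr u)

/-- The depth of `R/I` (w.r.t. the graded maximal ideal generated by the variables),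
defined as the supremum of lengths of `R/I`-regular sequences of elements of that ideal. -/
def quotDepth {K V : Type*} [Field K] (I : Ideal (MvPolynomial V K)) : ℕ :=
  sSup {n | ∃ rs : List (MvPolynomial V K), rs.length = n ∧
    (∀ r ∈ rs, r ∈ Ideal.span (Set.range (X : V → MvPolynomial V K))) ∧
    RingTheory.Sequence.IsRegular (MvPolynomial V K ⧸ I) rs}

/-- A finite graded free resolution of an ideal `I` of a polynomial ring, with
`rk i` the rank of the `i`-th free module and `deg i t` the degree (twist) of its
`t`-th basis element. -/
structure GradedFreeResolution {K V : Type*} [Field K] (I : Ideal (MvPolynomial V K)) where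
  rk : ℕ → ℕ
  deg : (i : ℕ) → Fin (rk i) → ℕ
  len : ℕ
  rk_eq_zero : ∀ i, len < i → rk i = 0
  aug : (Fin (rk 0) → MvPolynomial V K) →ₗ[MvPolynomial V K] MvPolynomial V K
  diff : (i : ℕ) →
    (Fin (rk (i + 1)) → MvPolynomial V K) →ₗ[MvPolynomial V K] (Fin (rk i) → MvPolynomial V K)
  aug_homogeneous : ∀ s : Fin (rk 0), (aug (Pi.single s 1)).IsHomogeneous (deg 0 s)
  diff_homogeneous : ∀ i (s : Fin (rk (i + 1))) (t : Fin (rk i)),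
    (diff i (Pi.single s 1) t).IsHomogeneous (deg (i + 1) s - deg i t) ∧
      (deg (i + 1) s < deg i t → diff i (Pi.single s 1) t = 0)
  range_aug : LinearMap.range aug = I
  exact_zero : LinearMap.ker aug = LinearMap.range (diff 0)
  exact_succ : ∀ i, LinearMap.ker (diff i) = LinearMap.range (diff (i + 1))

/-- The Castelnuovo–Mumford regularity of an ideal `I` of a polynomial ring: the least
`r` such that `I` admits a finite graded free resolution all of whose `i`-th twists are
at most `r + i`. -/
noncomputable def regCM {K V : Type*} [Field K] (I : Ideal (MvPolynomial V K)) : ℕ :=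
  sInf {r | ∃ F : GradedFreeResolution I, ∀ i (t : Fin (F.rk i)), F.deg i t ≤ r + i}

end


/-! The colon of a monomial ideal by `X x` is the monomial ideal generated by the exponents `m`
for which `m + eₓ` dominates an old generator. If `m + eₓ` dominates a `k`-matching `M` of `G`,
then either `M` meets `N[x]`, hence covers a neighbour `y` of `x` (an edge through `x` ends in
one) and `y ∣ m`, or `M` is a `k`-matching of `G \ N[x]` avoiding `x`, so it divides `m`.
If `m + eₓ` dominates `x y`, again `y ∣ m`. -/

open Finsupp

section MonomialColon

variable {σ R : Type*} [CommSemiring R]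

theorem span_monomial_image_union (S T : Set (σ →₀ ℕ)) :
    Ideal.span ((fun s => monomial s (1 : R)) '' (S ∪ T)) =
      Ideal.span ((fun s => monomial s (1 : R)) '' S) +
        Ideal.span ((fun s => monomial s (1 : R)) '' T) := by
  rw [Set.image_union, Ideal.span_union]
  rfl

theorem colon_span_X_eq_of_forall_exists_le_iff {S T : Set (σ →₀ ℕ)} {x : σ}
    (h : ∀ m, (∃ s ∈ S, s ≤ m + single x 1) ↔ ∃ t ∈ T, t ≤ m) :
    (Ideal.span ((fun s => monomial s (1 : R)) '' S)).colon
        (Ideal.span {(X x : MvPolynomial σ R)}) =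
      Ideal.span ((fun s => monomial s (1 : R)) '' T) := by
  ext p
  simp only [Ideal.mem_colon_span_singleton, mem_ideal_span_monomial_image, support_mul_X,
    Finset.forall_mem_map, addRightEmbedding_apply, h]

end MonomialColon

section Matchings

variable {V : Type*}

noncomputable def edgeExp (e : Sym2 V) : V →₀ ℕ :=
  Sym2.lift ⟨fun a b => single a 1 + single b 1, fun _ _ => add_comm _ _⟩ e

def matchingExps (G : SimpleGraph V) (k : ℕ) : Set (V →₀ ℕ) :=
  {s | ∃ M : Finset (Sym2 V), IsMatchingSet G M ∧ M.card = k ∧ s = ∑ e ∈ M, edgeExp e}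

theorem edgeProd_eq_monomial (K : Type*) [CommSemiring K] (e : Sym2 V) :
    edgeProd K e = monomial (edgeExp e) (1 : K) := by
  induction e using Sym2.inductionOn with
  | hf a b => simp [edgeProd, edgeExp, X, monomial_mul]

theorem prod_edgeProd_eq_monomial (K : Type*) [CommSemiring K] (M : Finset (Sym2 V)) :
    ∏ e ∈ M, edgeProd K e = monomial (∑ e ∈ M, edgeExp e) (1 : K) := by
  induction M using Finset.cons_induction with
  | empty => simp
  | cons e M he ih =>
    rw [Finset.prod_cons, Finset.sum_cons, ih, edgeProd_eq_monomial, monomial_mul, one_mul]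

theorem matchingPow_eq_span_monomial (K : Type*) [CommSemiring K] (G : SimpleGraph V) (k : ℕ) :
    matchingPow K G k = Ideal.span ((fun s => monomial s (1 : K)) '' matchingExps G k) := by
  unfold matchingPow matchingExps
  congr 1
  ext p
  constructor
  · rintro ⟨M, hM, hk, rfl⟩
    exact ⟨_, ⟨M, hM, hk, rfl⟩, (prod_edgeProd_eq_monomial K M).symm⟩
  · rintro ⟨s, ⟨M, hM, hk, rfl⟩, rfl⟩
    exact ⟨M, hM, hk, (prod_edgeProd_eq_monomial K M).symm⟩

theorem single_le_edgeExp {v : V} {e : Sym2 V} (h : v ∈ e) : single v 1 ≤ edgeExp e := by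
  induction e using Sym2.inductionOn with
  | hf a b =>
    rcases Sym2.mem_iff.1 h with rfl | rfl
    · exact le_self_add
    · exact le_add_self

theorem edgeExp_apply_eq_zero {v : V} {e : Sym2 V} (h : v ∉ e) : edgeExp e v = 0 := by
  induction e using Sym2.inductionOn with
  | hf a b =>
    rw [Sym2.mem_iff, not_or] at h
    simp [edgeExp, Ne.symm h.1, Ne.symm h.2]

theorem single_le_sum_edgeExp {M : Finset (Sym2 V)} {e : Sym2 V} (he : e ∈ M) {v : V}
    (hv : v ∈ e) : single v 1 ≤ ∑ e ∈ M, edgeExp e :=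
  (single_le_edgeExp hv).trans (Finset.single_le_sum (fun _ _ => zero_le) he)

theorem sum_edgeExp_apply_eq_zero {M : Finset (Sym2 V)} {v : V} (h : ∀ e ∈ M, v ∉ e) :
    (∑ e ∈ M, edgeExp e) v = 0 := by
  rw [finsetSum_apply]
  exact Finset.sum_eq_zero fun e he => edgeExp_apply_eq_zero (h e he)

theorem le_of_le_add_single_of_apply_eq_zero {s m : V →₀ ℕ} {x : V} (hx : s x = 0)
    (h : s ≤ m + single x 1) : s ≤ m := by
  intro v
  by_cases hv : v = x
  · simp [hv, hx]
  · simpa [single_apply, Ne.symm hv] using h v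

theorem IsMatchingSet.mono {G H : SimpleGraph V} (hGH : G ≤ H) {M : Finset (Sym2 V)}
    (hM : IsMatchingSet G M) : IsMatchingSet H M :=
  ⟨hM.1.trans (SimpleGraph.edgeSet_mono hGH), hM.2⟩

theorem delVerts_le (G : SimpleGraph V) (W : Set V) : delVerts G W ≤ G :=
  fun _ _ h => h.1

theorem IsMatchingSet.delVerts {G : SimpleGraph V} {M : Finset (Sym2 V)} {W : Set V}
    (hM : IsMatchingSet G M) (hW : ∀ e ∈ M, ∀ v ∈ e, v ∉ W) :
    IsMatchingSet (delVerts G W) M := by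
  refine ⟨fun e he => ?_, hM.2⟩
  have hG := hM.1 he
  induction e using Sym2.inductionOn with
  | hf a b => exact ⟨hG, hW _ he a (Sym2.mem_mk_left _ _), hW _ he b (Sym2.mem_mk_right _ _)⟩

theorem SimpleGraph.exists_mem_neighborSet_of_mem_edgeSet {G : SimpleGraph V} {x v : V}
    {e : Sym2 V} (he : e ∈ G.edgeSet) (hv : v ∈ e) (hvx : v ∈ insert x (G.neighborSet x)) :
    ∃ y ∈ G.neighborSet x, y ∈ e := by
  rcases hvx with rfl | hvx
  · induction e using Sym2.inductionOn with
    | hf a b =>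
      rcases Sym2.mem_iff.1 hv with rfl | rfl
      · exact ⟨b, he, Sym2.mem_mk_right _ _⟩
      · exact ⟨a, G.adj_symm he, Sym2.mem_mk_left _ _⟩
  · exact ⟨v, hvx, hv⟩

theorem exists_matchingExps_le_add_single_iff (G : SimpleGraph V) (x : V) (k : ℕ)
    (m : V →₀ ℕ) :
    (∃ s ∈ matchingExps G k ∪ (fun y => single x 1 + single y 1) '' G.neighborSet x,
        s ≤ m + single x 1) ↔
      ∃ s ∈ matchingExps (delVerts G (insert x (G.neighborSet x))) k ∪
          (fun y => single y 1) '' G.neighborSet x, s ≤ m := by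
  constructor
  · rintro ⟨s, hs, hsm⟩
    have of_neighbor : ∀ y ∈ G.neighborSet x, single y 1 ≤ s →
        ∃ t ∈ matchingExps (delVerts G (insert x (G.neighborSet x))) k ∪
          (fun y => single y 1) '' G.neighborSet x, t ≤ m := fun y hy hys =>
      ⟨single y 1, Or.inr ⟨y, hy, rfl⟩, le_of_le_add_single_of_apply_eq_zero
        (single_eq_of_ne (G.ne_of_adj hy)) (hys.trans hsm)⟩
    rcases hs with ⟨M, hM, hk, rfl⟩ | ⟨y, hy, rfl⟩
    · by_cases hmeet : ∃ e ∈ M, ∃ v ∈ e, v ∈ insert x (G.neighborSet x)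
      · obtain ⟨e, he, v, hv, hvx⟩ := hmeet
        obtain ⟨y, hy, hye⟩ :=
          SimpleGraph.exists_mem_neighborSet_of_mem_edgeSet (hM.1 he) hv hvx
        exact of_neighbor y hy (single_le_sum_edgeExp he hye)
      · push Not at hmeet
        have hx : (∑ e ∈ M, edgeExp e) x = 0 :=
          sum_edgeExp_apply_eq_zero fun e he hxe => hmeet e he x hxe (Set.mem_insert _ _)
        exact ⟨_, Or.inl ⟨M, hM.delVerts hmeet, hk, rfl⟩,
          le_of_le_add_single_of_apply_eq_zero hx hsm⟩
    · exact of_neighbor y hy le_add_self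
  · rintro ⟨s, ⟨M, hM, hk, rfl⟩ | ⟨y, hy, rfl⟩, hsm⟩
    · exact ⟨_, Or.inl ⟨M, hM.mono (delVerts_le _ _), hk, rfl⟩, hsm.trans le_self_add⟩
    · refine ⟨single x 1 + single y 1, Or.inr ⟨y, hy, rfl⟩, ?_⟩
      rw [add_comm m]
      exact add_le_add_right hsm _

end Matchings

theorem matchingPow_add_star_colon_vertex_general {K : Type*} [Field K] {V : Type*}
    (G : SimpleGraph V) (x : V) (k : ℕ) :
    Submodule.colon
        (matchingPow K G k +
          Ideal.span ((fun y => (X x * X y : MvPolynomial V K)) '' G.neighborSet x))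
        (Ideal.span {(X x : MvPolynomial V K)}) =
      matchingPow K (delVerts G (insert x (G.neighborSet x))) k +
        Ideal.span ((X : V → MvPolynomial V K) '' G.neighborSet x) := by
  have hstar : (fun y => (X x * X y : MvPolynomial V K)) '' G.neighborSet x =
      (fun s => monomial s 1) '' ((fun y => single x 1 + single y 1) '' G.neighborSet x) := by
    simp only [Set.image_image, X, monomial_mul, mul_one]
  have hvars : (X : V → MvPolynomial V K) '' G.neighborSet x =
      (fun s => monomial s 1) '' ((fun y => single y 1) '' G.neighborSet x) := by
    rw [Set.image_image]
    rfl
  rw [hstar, hvars, matchingPow_eq_span_monomial, matchingPow_eq_span_monomial,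
    ← span_monomial_image_union, ← span_monomial_image_union]
  exact colon_span_X_eq_of_forall_exists_le_iff (exists_matchingExps_le_add_single_iff G x k)

/-- `((I(G)^{[k]} + ⟨xy₁,…,xyₙ⟩) : x) = I(G \ {x,y₁,…,yₙ})^{[k]} + ⟨y₁,…,yₙ⟩`
where `N_G(x) = {y₁,…,yₙ}`. -/
theorem matchingPow_add_star_colon_vertex {K : Type*} [Field K] {V : Type*} [Fintype V]
    (G : SimpleGraph V) (x : V) (k : ℕ) (hk1 : 1 ≤ k) (hk2 : k ≤ matchingNumber G) :
    Submodule.colon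
        (matchingPow K G k +
          Ideal.span ((fun y => (X x * X y : MvPolynomial V K)) '' G.neighborSet x))
        (Ideal.span {(X x : MvPolynomial V K)}) =
      matchingPow K (delVerts G (insert x (G.neighborSet x))) k +
        Ideal.span ((X : V → MvPolynomial V K) '' G.neighborSet x) :=
  matchingPow_add_star_colon_vertex_general G x k
end

section
/- Let G = W(T_m) be a Cohen-Macaulay forest, i.e., the whisker graph on a forest T_m with m vertices. Then for every subset S ⊆ V(G) with |S| = m - k, the prime ideal ⟨S⟩ does not contain I(G)^{[k]}; consequently, height(I(G)^{[k]}) ≥ m - k + 1 and dim(R/I(G)^{[k]}) ≤ m + k - 1. -/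
open MvPolynomial

/-!
A prime `P ⊇ I(W(T))^{[k]}` contains more than `m - k` variables: otherwise some `k` whiskers
`{x_i, y_i}` avoid all variables in `P`, yet the product of their `2k` endpoints is a generator of
`I(W(T))^{[k]}` and hence lies in `P`. The variables in `P` span a monomial prime of height equal
to their number, which bounds the height of `P` from below; as `dim R = 2m`, every chain of primes
above `I(W(T))^{[k]}` then has length at most `2m - (m - k + 1) = m + k - 1`.
-/

lemma LTSeries.add_length_le_krullDim_of_le_height_head {α : Type*} [Preorder α]
    (p : LTSeries α) {n : ℕ} (hn : n ≤ Order.height p.head) :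
    ((n + p.length : ℕ) : WithBot ℕ∞) ≤ Order.krullDim α := by
  obtain ⟨q, hq, rfl⟩ := Order.exists_series_of_le_height p.head hn
  exact Order.LTSeries.length_le_krullDim (q.smash p hq)

lemma ringKrullDim_quotient_le_sub_of_le_height {R : Type*} [CommRing R] (I : Ideal R) {n N : ℕ}
    (hR : ringKrullDim R ≤ N) (hI : ∀ p : PrimeSpectrum R, I ≤ p.asIdeal → n ≤ Order.height p) :
    ringKrullDim (R ⧸ I) ≤ (N - n : ℕ) := by
  let e := I.primeSpectrumQuotientOrderIsoZeroLocus
  have hmono : StrictMono (Subtype.val ∘ e) := (Subtype.strictMono_coe _).comp e.strictMono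
  refine iSup_le fun c => ?_
  have hhead : I ≤ (c.map _ hmono).head.asIdeal :=
    (PrimeSpectrum.mem_zeroLocus _ _).mp (e c.head).2
  have hchain := ((c.map _ hmono).add_length_le_krullDim_of_le_height_head (hI _ hhead)).trans hR
  have hlen : n + c.length ≤ N := by exact_mod_cast hchain
  exact_mod_cast Nat.le_sub_of_add_le' hlen

namespace MvPolynomial

variable {σ R : Type*}

lemma X_mem_ideal_span_X_image [CommSemiring R] [Nontrivial R] {s : Set σ} {i : σ} :
    (X i : MvPolynomial σ R) ∈ Ideal.span (X '' s) ↔ i ∈ s := by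
  classical
  simp [mem_ideal_span_X_image, support_X (R := R), Finsupp.single_apply]

lemma isPrime_ideal_span_X_image [CommRing R] [IsDomain R] (s : Set σ) :
    (Ideal.span (X '' s : Set (MvPolynomial σ R))).IsPrime := by
  classical
  let φ : MvPolynomial σ R →ₐ[R] MvPolynomial σ R := aeval fun i => if i ∈ s then 0 else X i
  suffices Ideal.span (X '' s) = RingHom.ker φ from this ▸ RingHom.ker_isPrime φ
  apply le_antisymm
  · rw [Ideal.span_le]
    rintro _ ⟨i, hi, rfl⟩
    simp [φ, hi]
  · -- `φ` only kills variables of `s`, so it is the identity modulo `⟨X i | i ∈ s⟩`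
    have hφ : (Ideal.Quotient.mkₐ R (Ideal.span (X '' s))).comp φ =
        Ideal.Quotient.mkₐ R (Ideal.span (X '' s)) := by
      refine algHom_ext fun i => ?_
      by_cases hi : i ∈ s
      · simpa [φ, hi, eq_comm (a := (0 : _ ⧸ _)), Ideal.Quotient.eq_zero_iff_mem] using
          Ideal.subset_span (Set.mem_image_of_mem (X : σ → MvPolynomial σ R) hi)
      · simp [φ, hi]
    intro p hp
    rw [← Ideal.Quotient.eq_zero_iff_mem, ← Ideal.Quotient.mkₐ_eq_mk R, ← hφ, AlgHom.comp_apply,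
      RingHom.mem_ker.mp hp, map_zero]

lemma card_le_height_ideal_span_X_image [CommRing R] [IsDomain R] (S : Finset σ) :
    (S.card : ℕ∞) ≤ (Ideal.span (X '' S : Set (MvPolynomial σ R))).height := by
  classical
  induction S using Finset.induction_on with
  | empty => simp
  | insert a S ha ih =>
    have hlt : Ideal.span (X '' S : Set (MvPolynomial σ R)) < Ideal.span (X '' ↑(insert a S)) := by
      refine lt_of_le_of_ne (Ideal.span_mono (Set.image_mono (by simp))) fun h => ha ?_
      have hX : (X a : MvPolynomial σ R) ∈ Ideal.span (X '' ↑(insert a S)) :=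
        X_mem_ideal_span_X_image.mpr (by simp)
      rw [← h, X_mem_ideal_span_X_image] at hX
      exact hX
    have := isPrime_ideal_span_X_image (R := R) (S : Set σ)
    have := isPrime_ideal_span_X_image (R := R) (↑(insert a S) : Set σ)
    rw [Finset.card_insert_of_notMem ha, Nat.cast_succ]
    exact (add_le_add_left ih 1).trans (Ideal.height_add_one_le_of_lt_of_isPrime hlt)

end MvPolynomial

section WhiskerGraph

variable {V : Type*} (T : SimpleGraph V)

lemma whiskerGraph_adj_inl_inr (x : V) : (whiskerGraph T).Adj (Sum.inl x) (Sum.inr x) := by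
  simp [whiskerGraph]

@[simps]
def whiskerEdge : V ↪ Sym2 (V ⊕ V) :=
  ⟨fun x => s(Sum.inl x, Sum.inr x), fun x y h => by simpa using h⟩

lemma isMatchingSet_map_whiskerEdge (A : Finset V) :
    IsMatchingSet (whiskerGraph T) (A.map whiskerEdge) := by
  refine ⟨?_, ?_⟩
  · rintro _ he
    obtain ⟨x, -, rfl⟩ := Finset.mem_map.mp he
    exact whiskerGraph_adj_inl_inr T x
  · rintro _ he _ hf hne v hv
    obtain ⟨x, -, rfl⟩ := Finset.mem_map.mp he
    obtain ⟨y, -, rfl⟩ := Finset.mem_map.mp hf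
    have hxy : x ≠ y := fun h => hne (h ▸ rfl)
    simp only [whiskerEdge_apply, Sym2.mem_iff] at hv ⊢
    rcases hv with rfl | rfl <;> simp [hxy]

lemma prod_mul_X_mem_matchingPow (K : Type*) [CommSemiring K] (A : Finset V) :
    ∏ x ∈ A, (X (Sum.inl x) * X (Sum.inr x) : MvPolynomial (V ⊕ V) K) ∈
      matchingPow K (whiskerGraph T) A.card :=
  Ideal.subset_span ⟨A.map whiskerEdge, isMatchingSet_map_whiskerEdge T A, by simp,
    by simp [edgeProd]⟩

lemma exists_card_sub_lt_of_matchingPow_le [Fintype V] {K : Type*} [CommSemiring K]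
    (P : Ideal (MvPolynomial (V ⊕ V) K)) [P.IsPrime] {k : ℕ} (hk : k ≤ Fintype.card V)
    (hP : matchingPow K (whiskerGraph T) k ≤ P) :
    ∃ S : Finset (V ⊕ V), Fintype.card V - k < S.card ∧ ∀ v ∈ S, X v ∈ P := by
  classical
  set S := Finset.univ.filter fun v => (X v : MvPolynomial (V ⊕ V) K) ∈ P
  refine ⟨S, ?_, by simp [S]⟩
  by_contra! hS
  have hfree : k ≤ (S.image (Sum.elim id id))ᶜ.card := by
    rw [Finset.card_compl]
    have := (S.card_image_le (f := Sum.elim id id)).trans hS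
    omega
  obtain ⟨A, hA, rfl⟩ := Finset.exists_subset_card_eq hfree
  obtain ⟨x, hx, hxP⟩ := Ideal.IsPrime.prod_mem_iff.mp (hP (prod_mul_X_mem_matchingPow T K A))
  have hxS : Sum.inl x ∉ S ∧ Sum.inr x ∉ S := by
    have := Finset.mem_compl.mp (hA hx)
    exact ⟨fun h => this (Finset.mem_image.mpr ⟨_, h, rfl⟩),
      fun h => this (Finset.mem_image.mpr ⟨_, h, rfl⟩)⟩
  rcases Ideal.IsPrime.mem_or_mem ‹_› hxP with h | h
  · exact hxS.1 (by simpa [S] using h)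
  · exact hxS.2 (by simpa [S] using h)

variable [Fintype V] {K : Type*} [CommRing K] [IsDomain K] {k : ℕ}

lemma not_matchingPow_le_span_X_image (hk : k ≤ Fintype.card V) {S : Finset (V ⊕ V)}
    (hS : S.card ≤ Fintype.card V - k) :
    ¬ matchingPow K (whiskerGraph T) k ≤ Ideal.span (X '' ↑S) := by
  intro hle
  have := isPrime_ideal_span_X_image (R := K) (S : Set (V ⊕ V))
  obtain ⟨S', hcard, hS'⟩ := exists_card_sub_lt_of_matchingPow_le T _ hk hle
  have hsub : S' ⊆ S := fun v hv => by simpa [X_mem_ideal_span_X_image] using hS' v hv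
  exact (hcard.trans_le ((Finset.card_le_card hsub).trans hS)).false

lemma card_sub_add_one_le_height_of_matchingPow_le (hk : k ≤ Fintype.card V)
    (p : PrimeSpectrum (MvPolynomial (V ⊕ V) K))
    (hp : matchingPow K (whiskerGraph T) k ≤ p.asIdeal) :
    ((Fintype.card V - k + 1 : ℕ) : ℕ∞) ≤ Order.height p := by
  obtain ⟨S, hcard, hS⟩ := exists_card_sub_lt_of_matchingPow_le T _ hk hp
  have hle : Ideal.span (X '' ↑S) ≤ p.asIdeal := by
    rw [Ideal.span_le]
    rintro _ ⟨v, hv, rfl⟩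
    exact hS v hv
  calc ((Fintype.card V - k + 1 : ℕ) : ℕ∞)
      ≤ S.card := by exact_mod_cast hcard
    _ ≤ (Ideal.span (X '' ↑S : Set (MvPolynomial (V ⊕ V) K))).height :=
        card_le_height_ideal_span_X_image S
    _ ≤ Order.height p := (Ideal.height_mono hle).trans_eq p.height_eq_orderHeight

end WhiskerGraph

theorem whiskerForest_height_dim_general {K : Type*} [Field K] {V : Type*} [Fintype V]
    (m : ℕ) (hm : Fintype.card V = m) (T : SimpleGraph V)
    (k : ℕ) (hk2 : k ≤ m) :
    (∀ S : Finset (V ⊕ V), S.card = m - k →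
        ¬ matchingPow K (whiskerGraph T) k ≤
            Ideal.span ((X : V ⊕ V → MvPolynomial (V ⊕ V) K) '' ↑S)) ∧
      (∀ p : PrimeSpectrum (MvPolynomial (V ⊕ V) K),
          matchingPow K (whiskerGraph T) k ≤ p.asIdeal →
            ((m - k + 1 : ℕ) : ℕ∞) ≤ Order.height p) ∧
      ringKrullDim (MvPolynomial (V ⊕ V) K ⧸ matchingPow K (whiskerGraph T) k) ≤
        ((m + k - 1 : ℕ) : WithBot (WithTop ℕ)) := by
  subst hm
  have hheight := card_sub_add_one_le_height_of_matchingPow_le (K := K) T hk2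
  refine ⟨fun S hS => not_matchingPow_le_span_X_image T hk2 hS.le, hheight, ?_⟩
  have hdim : ringKrullDim (MvPolynomial (V ⊕ V) K) ≤ (2 * Fintype.card V : ℕ) := by
    simp [ringKrullDim_eq_zero_of_field, two_mul]
  rw [show Fintype.card V + k - 1 = 2 * Fintype.card V - (Fintype.card V - k + 1) by omega]
  exact ringKrullDim_quotient_le_sub_of_le_height _ hdim hheight

/-- For a Cohen–Macaulay forest `G = W(T_m)`, no prime generated by `m - k`
variables contains `I(G)^{[k]}`; consequently `height(I(G)^{[k]}) ≥ m - k + 1` and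
`dim(R/I(G)^{[k]}) ≤ m + k - 1`. -/
theorem whiskerForest_height_dim {K : Type*} [Field K] {V : Type*} [Fintype V] [DecidableEq V]
    (m : ℕ) (hm : Fintype.card V = m) (T : SimpleGraph V) (hT : T.IsAcyclic)
    (k : ℕ) (hk1 : 1 ≤ k) (hk2 : k ≤ m) :
    (∀ S : Finset (V ⊕ V), S.card = m - k →
        ¬ matchingPow K (whiskerGraph T) k ≤
            Ideal.span ((X : V ⊕ V → MvPolynomial (V ⊕ V) K) '' ↑S)) ∧
      (∀ p : PrimeSpectrum (MvPolynomial (V ⊕ V) K),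
          matchingPow K (whiskerGraph T) k ≤ p.asIdeal →
            ((m - k + 1 : ℕ) : ℕ∞) ≤ Order.height p) ∧
      ringKrullDim (MvPolynomial (V ⊕ V) K ⧸ matchingPow K (whiskerGraph T) k) ≤
        ((m + k - 1 : ℕ) : WithBot (WithTop ℕ)) :=
  whiskerForest_height_dim_general m hm T k hk2
end
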